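/- Let 𝒳 be a Polish space, W : 𝒳 → (0,∞) continuous, and (νₙ), ν_∞ nonnegative Borel measures with ∫ W dνₙ < ∞ and ∫ φ dνₙ → ∫ φ dν_∞ for every continuous φ with |φ| ≤ W. If φₙ, φ_∞ are continuous with φₙ → φ_∞ uniformly on compacts and sup_n sup_x |φₙ(x)|/W(x) < ∞, then ∫ φₙ dνₙ → ∫ φ_∞ dν_∞. -/

import Mathlib

/-!
Write `φ = W ψ`: then `∫ φ dν = ∫ ψ dμ` for the finite measure `μ = W ν`. When `W` is
`ν_∞`-integrable the hypothesis says exactly that `μₙ → μ_∞` weakly, and the functions `ψₙ = φₙ / W` are uniformly bounded and still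
converge uniformly on compacts, because `W` is bounded below on each compact set. A weakly
convergent sequence of finite measures on a Polish space is tight (Prokhorov), so
`∫ |ψₙ - ψ_∞| dμₙ` is small on a compact set `K` by uniform convergence and off `K` by tightness,
while `∫ ψ_∞ dμₙ → ∫ ψ_∞ dμ_∞` by weak convergence.
-/

open MeasureTheory Filter Topology Set

theorem TendstoUniformlyOn.div_of_isCompact {ι X : Type*} [TopologicalSpace X] {l : Filter ι}
    {F : ι → X → ℝ} {f w : X → ℝ} {K : Set X} (h : TendstoUniformlyOn F f l K)
    (hK : IsCompact K) (hw : ContinuousOn w K) (hw0 : ∀ x ∈ K, w x ≠ 0) :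
    TendstoUniformlyOn (fun i x => F i x / w x) (fun x => f x / w x) l K := by
  obtain ⟨B, hB⟩ := hK.exists_bound_of_continuousOn (hw.inv₀ hw0)
  rw [Metric.tendstoUniformlyOn_iff] at h ⊢
  intro ε hε
  filter_upwards [h (ε / (|B| + 1)) (by positivity)] with i hi x hx
  calc dist (f x / w x) (F i x / w x) = dist (f x) (F i x) * ‖(w x)⁻¹‖ := by
        rw [Real.dist_eq, Real.dist_eq, Real.norm_eq_abs, ← sub_div, div_eq_mul_inv, abs_mul]
    _ ≤ ε / (|B| + 1) * |B| := by
        gcongr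
        · exact (hi x hx).le
        · exact (hB x hx).trans (le_abs_self B)
    _ < ε := by
        rw [div_mul_eq_mul_div, div_lt_iff₀ (by positivity)]
        nlinarith

namespace MeasureTheory

variable {X : Type*} [MeasurableSpace X]

theorem isTightMeasureSet_range_of_tendsto [PseudoMetricSpace X] [CompleteSpace X]
    [SecondCountableTopology X] [OpensMeasurableSpace X] {μ : ℕ → FiniteMeasure X}
    {μ₀ : FiniteMeasure X} (hμ : Tendsto μ atTop (𝓝 μ₀)) :
    IsTightMeasureSet (range fun n => (μ n : Measure X)) := by
  rcases isEmpty_or_nonempty X with hX | hX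
  · exact .of_compactSpace
  -- adding a Dirac mass makes every measure nonzero, so that all of them can be normalized
  let δ : FiniteMeasure X := ⟨Measure.dirac hX.some, inferInstance⟩
  let ρ n := μ n + δ
  have hρ_ne : ∀ ν : FiniteMeasure X, ν + δ ≠ 0 := fun ν h => by
    have := congrArg (fun ν : FiniteMeasure X => (ν : Measure X) univ) h
    simp only [FiniteMeasure.toMeasure_add, Measure.add_apply, FiniteMeasure.toMeasure_zero] at this
    simp [δ] at this
  have hρ : Tendsto ρ atTop (𝓝 (μ₀ + δ)) := hμ.add_const δ
  have hP := FiniteMeasure.tendsto_normalize_of_tendsto hρ (hρ_ne μ₀)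
  have hP_tight := isTightMeasureSet_of_isCompact_closure
    (hP.isCompact_insert_range.closure_of_subset (subset_insert _ _))
  obtain ⟨M, hM⟩ := hρ.mass.bddAbove_range
  rw [isTightMeasureSet_iff_exists_isCompact_measure_compl_le] at hP_tight ⊢
  intro ε hε
  obtain ⟨K, hK, hKP⟩ := hP_tight (ε / (M + 1)) (ENNReal.div_pos hε.ne' (by simp))
  refine ⟨K, hK, ?_⟩
  rintro _ ⟨n, rfl⟩
  calc (μ n : Measure X) Kᶜ ≤ (ρ n : Measure X) Kᶜ := by simp [ρ]
    _ = (ρ n).mass * ((ρ n).normalize : Measure X) Kᶜ := by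
        rw [← FiniteMeasure.ennreal_coeFn_eq_coeFn_toMeasure,
          ← ProbabilityMeasure.ennreal_coeFn_eq_coeFn_toMeasure,
          FiniteMeasure.self_eq_mass_mul_normalize, ENNReal.coe_mul]
    _ ≤ (M + 1) * (ε / (M + 1)) := by
        gcongr
        · exact_mod_cast (hM ⟨n, rfl⟩).trans (le_add_of_nonneg_right zero_le_one)
        · exact hKP _ ⟨_, mem_range_self n, rfl⟩
    _ ≤ ε := ENNReal.mul_div_le

theorem tendsto_integral_of_isTightMeasureSet [TopologicalSpace X] [T2Space X]
    [OpensMeasurableSpace X] {μ : ℕ → Measure X} [∀ n, IsFiniteMeasure (μ n)]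
    (hμ : IsTightMeasureSet (range μ)) {M : ℝ} (hM : ∀ n, (μ n).real univ ≤ M)
    {g : ℕ → X → ℝ} {C : ℝ} (hC : ∀ n x, |g n x| ≤ C)
    (hunif : ∀ K, IsCompact K → TendstoUniformlyOn g 0 atTop K) :
    Tendsto (fun n => ∫ x, g n x ∂μ n) atTop (𝓝 0) := by
  rw [Metric.tendsto_nhds]
  intro ε hε
  set η := ε / (2 * (|C| + 1))
  set θ := ε / (2 * (|M| + 1))
  obtain ⟨K, hK, hKc⟩ := isTightMeasureSet_iff_exists_isCompact_measure_compl_le.1 hμ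
    (ENNReal.ofReal η) (by positivity)
  filter_upwards [Metric.tendstoUniformlyOn_iff.1 (hunif K hK) θ (by positivity)] with n hn
  have hbound : ∀ x, ‖g n x‖ ≤ θ + C * Kᶜ.indicator 1 x := by
    intro x
    by_cases hx : x ∈ K
    · simpa [hx] using (hn x hx).le
    · simpa [hx] using (hC n x).trans (le_add_of_nonneg_left (by positivity))
  have hKc_real : (μ n).real Kᶜ ≤ η :=
    ENNReal.toReal_le_of_le_ofReal (by positivity) (hKc _ (mem_range_self n))
  have hKm : MeasurableSet Kᶜ := hK.isClosed.measurableSet.compl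
  have hind : Integrable (fun x => C * Kᶜ.indicator 1 x) (μ n) :=
    ((integrable_indicator_iff hKm).2 (integrable_const 1).integrableOn).const_mul C
  rw [dist_zero_right]
  calc ‖∫ x, g n x ∂μ n‖ ≤ ∫ x, θ + C * Kᶜ.indicator 1 x ∂μ n :=
        norm_integral_le_of_norm_le ((integrable_const θ).add hind) (ae_of_all _ hbound)
    _ = θ * (μ n).real univ + C * (μ n).real Kᶜ := by
        rw [integral_add (integrable_const θ) hind, integral_const, integral_const_mul,
          integral_indicator_one hKm, smul_eq_mul, mul_comm]
    _ ≤ θ * |M| + |C| * η := by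
        gcongr
        · exact (hM n).trans (le_abs_self M)
        · exact le_abs_self C
    _ < ε := by
        have hθ : θ * |M| < ε / 2 := by
          rw [div_mul_eq_mul_div, div_lt_div_iff₀ (by positivity) two_pos]
          nlinarith [abs_nonneg M]
        have hη : |C| * η < ε / 2 := by
          rw [mul_div_assoc', div_lt_div_iff₀ (by positivity) two_pos]
          nlinarith [abs_nonneg C]
        linarith

theorem FiniteMeasure.tendsto_integral_of_tendstoUniformlyOn [MetricSpace X] [CompleteSpace X]
    [SecondCountableTopology X] [OpensMeasurableSpace X] {μ : ℕ → FiniteMeasure X}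
    {μ₀ : FiniteMeasure X} (hμ : Tendsto μ atTop (𝓝 μ₀)) {ψ : ℕ → X → ℝ} {ψ₀ : X → ℝ}
    (hψ : ∀ n, AEStronglyMeasurable (ψ n) (μ n)) (hψ₀ : Continuous ψ₀) {C : ℝ}
    (hC : ∀ n x, |ψ n x| ≤ C) (hunif : ∀ K, IsCompact K → TendstoUniformlyOn ψ ψ₀ atTop K) :
    Tendsto (fun n => ∫ x, ψ n x ∂(μ n : Measure X)) atTop (𝓝 (∫ x, ψ₀ x ∂(μ₀ : Measure X))) := by
  have hC₀ : ∀ x, |ψ₀ x| ≤ C := fun x =>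
    le_of_tendsto' ((hunif {x} isCompact_singleton).tendsto_at rfl).abs fun n => hC n x
  have hψ₀_int : ∀ n, Integrable ψ₀ (μ n) := fun n =>
    .of_bound hψ₀.aestronglyMeasurable C (ae_of_all _ hC₀)
  have hlim : Tendsto (fun n => ∫ x, ψ₀ x ∂(μ n : Measure X)) atTop
      (𝓝 (∫ x, ψ₀ x ∂(μ₀ : Measure X))) :=
    FiniteMeasure.tendsto_iff_forall_integral_tendsto.1 hμ
      (BoundedContinuousFunction.ofNormedAddCommGroup ψ₀ hψ₀ C hC₀)
  obtain ⟨M, hM⟩ := hμ.mass.bddAbove_range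
  have herr : Tendsto (fun n => ∫ x, ψ n x - ψ₀ x ∂(μ n : Measure X)) atTop (𝓝 0) := by
    refine tendsto_integral_of_isTightMeasureSet (isTightMeasureSet_range_of_tendsto hμ)
      (M := M) (C := 2 * C) (fun n => ?_) (fun n x => ?_) (fun K hK => ?_)
    · rw [measureReal_def, ← FiniteMeasure.ennreal_mass, ENNReal.coe_toReal]
      exact_mod_cast hM ⟨n, rfl⟩
    · exact (abs_sub _ _).trans (by linarith [hC n x, hC₀ x])
    · rw [Metric.tendstoUniformlyOn_iff]
      intro ε hε
      filter_upwards [Metric.tendstoUniformlyOn_iff.1 (hunif K hK) ε hε] with n hn x hx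
      simpa [Real.dist_eq, abs_sub_comm] using hn x hx
  refine (add_zero (∫ x, ψ₀ x ∂(μ₀ : Measure X)) ▸ hlim.add herr).congr fun n => ?_
  have hψ_int : Integrable (ψ n) (μ n) := .of_bound (hψ n) C (ae_of_all _ (hC n))
  rw [integral_sub hψ_int (hψ₀_int n)]
  ring

section Weighted

variable {ν : ℕ → Measure X} {ν₀ : Measure X} {W : X → ℝ}

theorem tendsto_integral_of_abs_le_const_mul [TopologicalSpace X] (hW₀ : ∀ x, 0 ≤ W x)
    (hconv : ∀ φ : X → ℝ, Continuous φ → (∀ x, |φ x| ≤ W x) →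
      Tendsto (fun n => ∫ x, φ x ∂ν n) atTop (𝓝 (∫ x, φ x ∂ν₀)))
    {g : X → ℝ} (hg : Continuous g) {c : ℝ} (hgc : ∀ x, |g x| ≤ c * W x) :
    Tendsto (fun n => ∫ x, g x ∂ν n) atTop (𝓝 (∫ x, g x ∂ν₀)) := by
  set c' := max c 1
  have hc' : 0 < c' := lt_max_of_lt_right one_pos
  have hscaled : ∀ x, |c'⁻¹ * g x| ≤ W x := fun x => by
    rw [abs_mul, abs_inv, abs_of_pos hc', inv_mul_le_iff₀ hc']
    exact (hgc x).trans (by gcongr; exacts [hW₀ x, le_max_left c 1])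
  simpa [integral_const_mul, mul_inv_cancel_left₀ hc'.ne'] using
    (hconv _ (continuous_const.mul hg) hscaled).const_mul c'

theorem tendsto_integral_zero_of_abs_le_const_mul (hWint : ∀ n, Integrable W (ν n))
    (hW : Tendsto (fun n => ∫ x, W x ∂ν n) atTop (𝓝 0)) {φ : ℕ → X → ℝ} {C : ℝ}
    (hφ : ∀ n x, |φ n x| ≤ C * W x) : Tendsto (fun n => ∫ x, φ n x ∂ν n) atTop (𝓝 0) := by
  refine squeeze_zero_norm (fun n => norm_integral_le_of_norm_le ((hWint n).const_mul C)
    (ae_of_all _ (hφ n))) ?_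
  simpa [integral_const_mul] using hW.const_mul C

noncomputable def FiniteMeasure.withDensityOfReal (μ : Measure X) {f : X → ℝ}
    (hf : Integrable f μ) : FiniteMeasure X :=
  ⟨μ.withDensity fun x => ENNReal.ofReal (f x), isFiniteMeasure_withDensity_ofReal hf.2⟩

theorem FiniteMeasure.integral_withDensityOfReal {μ : Measure X} {f : X → ℝ}
    (hf : Integrable f μ) (hf₀ : ∀ x, 0 ≤ f x) (g : X → ℝ) :
    ∫ x, g x ∂(withDensityOfReal μ hf : Measure X) = ∫ x, f x * g x ∂μ := by
  rw [FiniteMeasure.withDensityOfReal, FiniteMeasure.toMeasure_mk,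
    integral_withDensity_eq_integral_toReal_smul₀ hf.aemeasurable.ennreal_ofReal
      (ae_of_all _ fun _ => ENNReal.ofReal_lt_top)]
  simp [ENNReal.toReal_ofReal (hf₀ _)]

theorem FiniteMeasure.tendsto_withDensityOfReal [TopologicalSpace X] [OpensMeasurableSpace X]
    (hW : Continuous W) (hW₀ : ∀ x, 0 ≤ W x) (hWint : ∀ n, Integrable W (ν n))
    (hWint₀ : Integrable W ν₀)
    (hconv : ∀ φ : X → ℝ, Continuous φ → (∀ x, |φ x| ≤ W x) →
      Tendsto (fun n => ∫ x, φ x ∂ν n) atTop (𝓝 (∫ x, φ x ∂ν₀))) :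
    Tendsto (fun n => withDensityOfReal (ν n) (hWint n)) atTop
      (𝓝 (withDensityOfReal ν₀ hWint₀)) := by
  refine FiniteMeasure.tendsto_iff_forall_integral_tendsto.2 fun f => ?_
  simp only [integral_withDensityOfReal _ hW₀]
  refine tendsto_integral_of_abs_le_const_mul hW₀ hconv (hW.mul f.continuous) (c := ‖f‖)
    fun x => ?_
  rw [abs_mul, abs_of_nonneg (hW₀ x), mul_comm ‖f‖]
  exact mul_le_mul_of_nonneg_left (f.norm_coe_le_norm x) (hW₀ x)

end Weighted

end MeasureTheory

theorem converging_integrals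
    {𝒳 : Type*} [MetricSpace 𝒳] [CompleteSpace 𝒳] [SecondCountableTopology 𝒳]
    [MeasurableSpace 𝒳] [BorelSpace 𝒳]
    (W : 𝒳 → ℝ) (hWc : Continuous W) (hWpos : ∀ x, 0 < W x)
    (ν : ℕ → Measure 𝒳) (νlim : Measure 𝒳)
    (hWint : ∀ n, Integrable W (ν n))
    (hconv : ∀ φ : 𝒳 → ℝ, Continuous φ → (∀ x, |φ x| ≤ W x) →
      Tendsto (fun n => ∫ x, φ x ∂(ν n)) atTop (nhds (∫ x, φ x ∂νlim)))
    (φ : ℕ → 𝒳 → ℝ) (φlim : 𝒳 → ℝ)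
    (hφc : ∀ n, Continuous (φ n)) (hφlimc : Continuous φlim)
    (hunif : ∀ K : Set 𝒳, IsCompact K → TendstoUniformlyOn φ φlim atTop K)
    (hdom : ∃ C : ℝ, ∀ n x, |φ n x| ≤ C * W x) :
    Tendsto (fun n => ∫ x, φ n x ∂(ν n)) atTop (nhds (∫ x, φlim x ∂νlim)) := by
  obtain ⟨C, hC⟩ := hdom
  have hW₀ : ∀ x, 0 ≤ W x := fun x => (hWpos x).le
  have hW_ne : ∀ x, W x ≠ 0 := fun x => (hWpos x).ne'
  have hClim : ∀ x, |φlim x| ≤ C * W x := fun x =>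
    le_of_tendsto' ((hunif {x} isCompact_singleton).tendsto_at rfl).abs fun n => hC n x
  have hψC : ∀ n x, |φ n x / W x| ≤ C := fun n x => by
    rw [abs_div, abs_of_pos (hWpos x), div_le_iff₀ (hWpos x)]
    exact hC n x
  by_cases hWlim : Integrable W νlim
  · have key := FiniteMeasure.tendsto_integral_of_tendstoUniformlyOn
      (FiniteMeasure.tendsto_withDensityOfReal hWc hW₀ hWint hWlim hconv)
      (ψ := fun n x => φ n x / W x) (ψ₀ := fun x => φlim x / W x)
      (fun n => ((hφc n).div hWc hW_ne).aestronglyMeasurable) (hφlimc.div hWc hW_ne) hψC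
      (fun K hK => (hunif K hK).div_of_isCompact hK hWc.continuousOn fun x _ => hW_ne x)
    simpa only [FiniteMeasure.integral_withDensityOfReal _ hW₀, mul_div_cancel₀ _ (hW_ne _)]
      using key
  -- otherwise `∫ x, W x ∂νlim` is the junk value `0`, so every integral tends to `0`
  · have hWlim_zero : Tendsto (fun n => ∫ x, W x ∂ν n) atTop (𝓝 0) := by
      simpa [integral_undef hWlim] using
        hconv W hWc fun x => (abs_of_pos (hWpos x)).le
    have hlim_zero : ∫ x, φlim x ∂νlim = 0 := tendsto_nhds_unique
      (tendsto_integral_of_abs_le_const_mul hW₀ hconv hφlimc hClim)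
      (tendsto_integral_zero_of_abs_le_const_mul hWint hWlim_zero (fun _ => hClim))
    rw [hlim_zero]
    exact tendsto_integral_zero_of_abs_le_const_mul hWint hWlim_zero hC
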